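/- Let p be an odd prime, m ≥ 1, α with v_p(α-1) = m, and H the group of order p^{6m} with presentation ⟨A,B | A^{[A,B]} = A^α, B^{[B,A]} = B^α, A^{p^{2m}} = 1, B^{p^{2m}} = 1⟩. Then B^{A^{p^m}} = B·C^{-p^m} where C = [A,B]; consequently A^{p^m} and B^{p^m} commute. -/
import Mathlib


/-- Relators of the group `H(α)`:
`A^{[A,B]} = A^α`, `B^{[B,A]} = B^α`, `A^{p^{2m}} = 1`, `B^{p^{2m}} = 1`,
with the convention `[A,B] = A⁻¹B⁻¹AB` and `x^y = y⁻¹xy`. -/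
def hRels (p m : ℕ) (α : ℤ) : Set (FreeGroup (Fin 2)) :=
  let A : FreeGroup (Fin 2) := FreeGroup.of 0
  let B : FreeGroup (Fin 2) := FreeGroup.of 1
  let C : FreeGroup (Fin 2) := A⁻¹ * B⁻¹ * A * B
  {(C⁻¹ * A * C) * (A ^ α)⁻¹, (C * B * C⁻¹) * (B ^ α)⁻¹,
    A ^ (p ^ (2 * m)), B ^ (p ^ (2 * m))}

/-- The group `H(α)` of order `p^{6m}`. -/
abbrev HGroup (p m : ℕ) (α : ℤ) := PresentedGroup (hRels p m α)

/-- `v_p(α - 1) = m`. -/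
def vCond (p m : ℕ) (α : ℤ) : Prop :=
  (p : ℤ) ^ m ∣ α - 1 ∧ ¬ (p : ℤ) ^ (m + 1) ∣ α - 1

namespace HGroupAux

/-- Geometric sum `1 + α + ⋯ + α^(k-1)`. -/
def sGeom (α : ℤ) (k : ℕ) : ℤ := ∑ i ∈ Finset.range k, α ^ i

/-- The exponent sequence `f k = k·α^k − α·(1 + α + ⋯ + α^(k-1))`. -/
def fSeq (α : ℤ) (k : ℕ) : ℤ := k * α ^ k - α * sGeom α k

/-- The sum `g n = α^k + α^(2k) + ⋯ + α^(nk)` for `k = p^m`. -/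
def gSeq (α : ℤ) (k : ℕ) (n : ℕ) : ℤ := ∑ i ∈ Finset.range n, α ^ (k * (i + 1))

lemma sGeom_succ (α : ℤ) (k : ℕ) : sGeom α (k + 1) = α * sGeom α k + 1 :=
  geom_sum_succ

lemma sGeom_mul (α : ℤ) (k : ℕ) : (α - 1) * sGeom α k = α ^ k - 1 := by
  rw [mul_comm]; exact geom_sum_mul α k

lemma fSeq_succ (α : ℤ) (k : ℕ) :
    fSeq α (k + 1) = α * (fSeq α k + (α - 1) * sGeom α k) := by
  have hg := sGeom_mul α k
  simp only [fSeq, sGeom_succ]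
  push_cast
  linear_combination (-α) * hg

lemma pow_expand (x : ℤ) (k : ℕ) : ∃ t : ℤ,
    2 * x ^ k = 2 + 2 * (k : ℤ) * (x - 1) + (k : ℤ) * ((k : ℤ) - 1) * (x - 1) ^ 2
      + (x - 1) ^ 3 * t := by
  induction k with
  | zero => exact ⟨0, by norm_num⟩
  | succ n ih =>
    obtain ⟨t, ht⟩ := ih
    refine ⟨t + (n : ℤ) * ((n : ℤ) - 1) + (x - 1) * t, ?_⟩
    have h : (2 : ℤ) * x ^ (n + 1) = x * (2 * x ^ n) := by ring
    rw [h, ht]; push_cast; ring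

lemma two_mul_fSeq (α : ℤ) (k : ℕ) : ∃ t : ℤ,
    2 * fSeq α k = (α - 1) * (k : ℤ) * ((k : ℤ) - 1) + (α - 1) ^ 2 * t := by
  obtain ⟨w, hw⟩ := pow_expand α k
  by_cases hα1 : α = 1
  · refine ⟨0, ?_⟩
    simp [fSeq, sGeom, hα1]
  · have hne : α - 1 ≠ 0 := sub_ne_zero.mpr hα1
    have hms := sGeom_mul α k
    have hσ : 2 * sGeom α k = 2 * (k : ℤ) + (k : ℤ) * ((k : ℤ) - 1) * (α - 1)
        + (α - 1) ^ 2 * w := by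
      apply mul_left_cancel₀ hne
      linear_combination 2 * hms + hw
    refine ⟨(k : ℤ) ^ 2 * ((k : ℤ) - 1) - (k : ℤ) * ((k : ℤ) - 1) - w
      + (α - 1) * ((k : ℤ) - 1) * w, ?_⟩
    simp only [fSeq]
    linear_combination (k : ℤ) * hw - α * hσ

variable {p m : ℕ} {α : ℤ}

lemma coprime_two (hp : p.Prime) (hodd : Odd p) : IsCoprime ((p : ℤ) ^ (2 * m)) 2 := by
  apply IsCoprime.pow_left
  rw [Int.isCoprime_iff_gcd_eq_one]
  have h2 : p ≠ 2 := by rintro rfl; exact (by norm_num : ¬ Odd 2) hodd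
  have : Nat.Coprime p 2 := (Nat.coprime_primes hp Nat.prime_two).mpr h2
  simpa [Int.gcd] using this

lemma dvd_of_two_mul (hp : p.Prime) (hodd : Odd p) {x : ℤ}
    (h : (p : ℤ) ^ (2 * m) ∣ 2 * x) : (p : ℤ) ^ (2 * m) ∣ x :=
  (coprime_two hp hodd).dvd_of_dvd_mul_left h

lemma pow_two_m (p m : ℕ) : ((p : ℤ)) ^ (2 * m) = (p : ℤ) ^ m * (p : ℤ) ^ m := by
  rw [two_mul, pow_add]

/-- `p^{2m} ∣ f k` whenever `p^m ∣ k`. -/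
lemma dvd_fSeq (hp : p.Prime) (hodd : Odd p) (hd : (p : ℤ) ^ m ∣ α - 1)
    (k : ℕ) (hk : (p : ℤ) ^ m ∣ (k : ℤ)) : (p : ℤ) ^ (2 * m) ∣ fSeq α k := by
  apply dvd_of_two_mul hp hodd
  obtain ⟨t, ht⟩ := two_mul_fSeq α k
  rw [ht, pow_two_m]
  apply dvd_add
  · exact dvd_mul_of_dvd_left (mul_dvd_mul hd hk) _
  · exact dvd_mul_of_dvd_left (by rw [sq]; exact mul_dvd_mul hd hd) _

/-- `p^{2m} ∣ α^{p^m} − 1`. -/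
lemma dvd_pow_sub_one (hp : p.Prime) (hodd : Odd p) (hd : (p : ℤ) ^ m ∣ α - 1) :
    (p : ℤ) ^ (2 * m) ∣ α ^ (p ^ m) - 1 := by
  apply dvd_of_two_mul hp hodd
  obtain ⟨t, ht⟩ := pow_expand α (p ^ m)
  have h2 : 2 * (α ^ (p ^ m) - 1) = 2 * ((p ^ m : ℕ) : ℤ) * (α - 1)
      + ((p ^ m : ℕ) : ℤ) * (((p ^ m : ℕ) : ℤ) - 1) * (α - 1) ^ 2 + (α - 1) ^ 3 * t := by
    linear_combination ht
  have hpm : (p : ℤ) ^ m ∣ ((p ^ m : ℕ) : ℤ) := by push_cast; rfl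
  have hsq : (p : ℤ) ^ m * (p : ℤ) ^ m ∣ (α - 1) ^ 2 := by
    rw [sq]; exact mul_dvd_mul hd hd
  rw [h2, pow_two_m]
  apply dvd_add
  apply dvd_add
  · rw [mul_assoc]
    exact Dvd.dvd.mul_left (mul_dvd_mul hpm hd) 2
  · exact Dvd.dvd.mul_left hsq _
  · exact dvd_mul_of_dvd_left (hsq.trans (pow_dvd_pow _ (by norm_num))) t

end HGroupAux
namespace HGroupAux

/-- The main computation, carried out in an arbitrary group satisfying the relations. -/
lemma key {G : Type*} [Group G] (p m : ℕ) (hp : p.Prime) (hodd : Odd p)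
    (α : ℤ) (hd : (p : ℤ) ^ m ∣ α - 1) (a b c : G)
    (hcdef : c = a⁻¹ * b⁻¹ * a * b)
    (h1 : c⁻¹ * a * c = a ^ α)
    (h2 : c * b * c⁻¹ = b ^ α)
    (h3 : a ^ (p ^ (2 * m)) = 1)
    (h4 : b ^ (p ^ (2 * m)) = 1) :
    (a ^ (p ^ m))⁻¹ * b * a ^ (p ^ m) = b * (c ^ (p ^ m))⁻¹ ∧
      Commute (a ^ (p ^ m)) (b ^ (p ^ m)) := by
  -- conjugation of powers of `a` by `c`
  have e1 : ∀ j : ℤ, c⁻¹ * a ^ j * c = a ^ (α * j) := by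
    intro j
    have h := conj_zpow (i := j) (a := c⁻¹) (b := a)
    rw [inv_inv] at h
    rw [← h, h1, ← zpow_mul]
  have e1j : ∀ j : ℤ, c⁻¹ * a ^ j = a ^ (α * j) * c⁻¹ := by
    intro j
    have h := e1 j
    have h' : c⁻¹ * a ^ j = (c⁻¹ * a ^ j * c) * c⁻¹ := by group
    rw [h', h]
  -- conjugation of powers of `b` by `c`
  have e2 : ∀ j : ℤ, c * b ^ j * c⁻¹ = b ^ (α * j) := by
    intro j
    have h := conj_zpow (i := j) (a := c) (b := b)
    rw [← h, h2, ← zpow_mul]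
  have e2j : ∀ j : ℤ, b ^ j * c⁻¹ = c⁻¹ * b ^ (α * j) := by
    intro j
    have h := e2 j
    have h' : b ^ j * c⁻¹ = c⁻¹ * (c * b ^ j * c⁻¹) := by group
    rw [h', h]
  -- conjugation by `a`
  have d3 : a⁻¹ * b * a = b * c⁻¹ := by rw [hcdef]; group
  have d4 : a⁻¹ * c⁻¹ * a = a ^ (α - 1) * c⁻¹ := by
    have h := e1j 1
    rw [mul_one, zpow_one] at h
    calc a⁻¹ * c⁻¹ * a = a⁻¹ * (c⁻¹ * a) := by group
      _ = a⁻¹ * (a ^ α * c⁻¹) := by rw [h]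
      _ = a ^ (α - 1) * c⁻¹ := by group
  -- conjugation of `(c^k)⁻¹` by `a`
  have hE : ∀ k : ℕ, a⁻¹ * (c ^ k)⁻¹ * a = a ^ ((α - 1) * sGeom α k) * (c ^ k)⁻¹ := by
    intro k
    induction k with
    | zero => simp [sGeom]
    | succ n ih =>
      calc a⁻¹ * (c ^ (n + 1))⁻¹ * a
          = (a⁻¹ * c⁻¹ * a) * (a⁻¹ * (c ^ n)⁻¹ * a) := by group
        _ = (a ^ (α - 1) * c⁻¹) * (a ^ ((α - 1) * sGeom α n) * (c ^ n)⁻¹) := by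
            rw [d4, ih]
        _ = a ^ (α - 1) * (c⁻¹ * a ^ ((α - 1) * sGeom α n)) * (c ^ n)⁻¹ := by group
        _ = a ^ (α - 1) * (a ^ (α * ((α - 1) * sGeom α n)) * c⁻¹) * (c ^ n)⁻¹ := by
            rw [e1j]
        _ = a ^ ((α - 1) * sGeom α (n + 1)) * (c ^ (n + 1))⁻¹ := by
            rw [sGeom_succ, show (α - 1) * (α * sGeom α n + 1)
              = (α - 1) + α * ((α - 1) * sGeom α n) by ring]
            group
  -- the main conjugation formula
  have hP : ∀ k : ℕ, (a ^ k)⁻¹ * b * a ^ k = b * a ^ (fSeq α k) * (c ^ k)⁻¹ := by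
    intro k
    induction k with
    | zero => simp [fSeq, sGeom]
    | succ n ih =>
      calc (a ^ (n + 1))⁻¹ * b * a ^ (n + 1)
          = a⁻¹ * ((a ^ n)⁻¹ * b * a ^ n) * a := by group
        _ = a⁻¹ * (b * a ^ (fSeq α n) * (c ^ n)⁻¹) * a := by rw [ih]
        _ = (a⁻¹ * b * a) * a ^ (fSeq α n) * (a⁻¹ * (c ^ n)⁻¹ * a) := by group
        _ = (b * c⁻¹) * a ^ (fSeq α n)
            * (a ^ ((α - 1) * sGeom α n) * (c ^ n)⁻¹) := by rw [d3, hE]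
        _ = b * (c⁻¹ * a ^ (fSeq α n + (α - 1) * sGeom α n)) * (c ^ n)⁻¹ := by
            rw [zpow_add]; group
        _ = b * (a ^ (α * (fSeq α n + (α - 1) * sGeom α n)) * c⁻¹) * (c ^ n)⁻¹ := by
            rw [e1j]
        _ = b * a ^ (fSeq α (n + 1)) * (c ^ (n + 1))⁻¹ := by
            rw [fSeq_succ]; group
  -- killing powers of `a` and `b`
  have hcast : ((p : ℤ)) ^ (2 * m) = ((p ^ (2 * m) : ℕ) : ℤ) := by push_cast; rfl
  have ha_ann : ∀ j : ℤ, (p : ℤ) ^ (2 * m) ∣ j → a ^ j = 1 := by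
    intro j ⟨t, ht⟩
    rw [ht, hcast, zpow_mul, zpow_natCast, h3, one_zpow]
  have hb_ann : ∀ j : ℤ, (p : ℤ) ^ (2 * m) ∣ j → b ^ j = 1 := by
    intro j ⟨t, ht⟩
    rw [ht, hcast, zpow_mul, zpow_natCast, h4, one_zpow]
  have hpm_cast : ∀ r : ℕ, (p : ℤ) ^ r = ((p ^ r : ℕ) : ℤ) := by intro r; push_cast; rfl
  -- part 1
  have hdvd1 : (p : ℤ) ^ (2 * m) ∣ fSeq α (p ^ m) :=
    dvd_fSeq hp hodd hd _ (by rw [← hpm_cast])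
  have part1 : (a ^ (p ^ m))⁻¹ * b * a ^ (p ^ m) = b * (c ^ (p ^ m))⁻¹ := by
    have h := hP (p ^ m)
    rwa [ha_ann _ hdvd1, mul_one] at h
  refine ⟨part1, ?_⟩
  -- order of c divides p^(2m)
  have hdvd2 : (p : ℤ) ^ (2 * m) ∣ fSeq α (p ^ (2 * m)) := by
    refine dvd_fSeq hp hodd hd _ ?_
    rw [← hpm_cast]
    exact pow_dvd_pow _ (by omega)
  have hcord : (c ^ (p ^ (2 * m)))⁻¹ = 1 := by
    have h := hP (p ^ (2 * m))
    rw [h3, ha_ann _ hdvd2, mul_one] at h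
    simp only [inv_one, one_mul, mul_one] at h
    exact (left_eq_mul.mp h)
  -- moving powers of b past powers of c
  have e2n : ∀ (n : ℕ) (j : ℤ), b ^ j * (c ^ n)⁻¹ = (c ^ n)⁻¹ * b ^ (α ^ n * j) := by
    intro n
    induction n with
    | zero => intro j; simp
    | succ n ih =>
      intro j
      calc b ^ j * (c ^ (n + 1))⁻¹ = (b ^ j * (c ^ n)⁻¹) * c⁻¹ := by group
        _ = (c ^ n)⁻¹ * (b ^ (α ^ n * j) * c⁻¹) := by rw [ih]; group
        _ = (c ^ n)⁻¹ * (c⁻¹ * b ^ (α * (α ^ n * j))) := by rw [e2j]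
        _ = (c ^ (n + 1))⁻¹ * b ^ (α ^ (n + 1) * j) := by
            rw [show α ^ (n + 1) * j = α * (α ^ n * j) by ring]; group
  -- powers of b·(c^{p^m})⁻¹
  have hF : ∀ n : ℕ, (b * (c ^ (p ^ m))⁻¹) ^ n
      = (c ^ (p ^ m * n))⁻¹ * b ^ (gSeq α (p ^ m) n) := by
    intro n
    induction n with
    | zero => simp [gSeq]
    | succ n ih =>
      calc (b * (c ^ (p ^ m))⁻¹) ^ (n + 1)
          = (b * (c ^ (p ^ m))⁻¹) * (b * (c ^ (p ^ m))⁻¹) ^ n := by rw [pow_succ']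
        _ = b ^ (1 : ℤ) * (c ^ (p ^ m * (n + 1)))⁻¹ * b ^ (gSeq α (p ^ m) n) := by
            rw [ih, show p ^ m * (n + 1) = p ^ m + p ^ m * n by ring, pow_add]
            group
        _ = (c ^ (p ^ m * (n + 1)))⁻¹ * b ^ (α ^ (p ^ m * (n + 1)) * 1)
            * b ^ (gSeq α (p ^ m) n) := by rw [e2n]
        _ = (c ^ (p ^ m * (n + 1)))⁻¹ * b ^ (gSeq α (p ^ m) (n + 1)) := by
            rw [show gSeq α (p ^ m) (n + 1)
              = gSeq α (p ^ m) n + α ^ (p ^ m * (n + 1)) from Finset.sum_range_succ _ _]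
            group
  -- divisibility of gSeq
  have hα2m : (p : ℤ) ^ (2 * m) ∣ α ^ (p ^ m) - 1 := dvd_pow_sub_one hp hodd hd
  have hgdvd : (p : ℤ) ^ (2 * m) ∣ gSeq α (p ^ m) (p ^ m) - ((p ^ m : ℕ) : ℤ) := by
    have hsum : gSeq α (p ^ m) (p ^ m) - ((p ^ m : ℕ) : ℤ)
        = ∑ i ∈ Finset.range (p ^ m), (α ^ (p ^ m * (i + 1)) - 1) := by
      rw [Finset.sum_sub_distrib, Finset.sum_const, Finset.card_range, nsmul_eq_mul,
        mul_one, gSeq]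
    rw [hsum]
    refine Finset.dvd_sum fun i _ => ?_
    have : α ^ (p ^ m * (i + 1)) - 1 = (α ^ (p ^ m)) ^ (i + 1) - 1 ^ (i + 1) := by
      rw [← pow_mul, one_pow]
    rw [this]
    exact hα2m.trans (sub_dvd_pow_sub_pow _ _ _)
  -- conjugate of b^{p^m}
  have conj_pow' : ∀ (x y : G) (n : ℕ), (x⁻¹ * y * x) ^ n = x⁻¹ * y ^ n * x := by
    intro x y n
    induction n with
    | zero => simp
    | succ n ih => rw [pow_succ, ih, pow_succ]; group
  have hconj : (a ^ (p ^ m))⁻¹ * b ^ (p ^ m) * a ^ (p ^ m) = b ^ (p ^ m) := by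
    have h := conj_pow' (a ^ (p ^ m)) b (p ^ m)
    rw [part1, hF] at h
    have hk2 : p ^ m * p ^ m = p ^ (2 * m) := by rw [two_mul, pow_add]
    rw [hk2, hcord, one_mul] at h
    obtain ⟨t, ht⟩ := hgdvd
    have : b ^ (gSeq α (p ^ m) (p ^ m)) = b ^ (p ^ m) := by
      have hgs : gSeq α (p ^ m) (p ^ m) = ((p ^ m : ℕ) : ℤ) + (p : ℤ) ^ (2 * m) * t := by
        linarith [ht]
      rw [hgs, zpow_add, zpow_natCast, hb_ann _ ⟨t, rfl⟩, mul_one]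
    rw [this] at h
    exact h.symm
  have : a ^ (p ^ m) * ((a ^ (p ^ m))⁻¹ * b ^ (p ^ m) * a ^ (p ^ m))
      = b ^ (p ^ m) * a ^ (p ^ m) := by group
  rw [hconj] at this
  exact this

end HGroupAux

theorem HGroup_comm_relations (p m : ℕ) (hp : p.Prime) (hodd : Odd p) (hm : 1 ≤ m)
    (α : ℤ) (hα : vCond p m α) :
    let A : HGroup p m α := PresentedGroup.of 0
    let B : HGroup p m α := PresentedGroup.of 1
    let C : HGroup p m α := A⁻¹ * B⁻¹ * A * B
    (A ^ (p ^ m))⁻¹ * B * A ^ (p ^ m) = B * (C ^ (p ^ m))⁻¹ ∧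
      Commute (A ^ (p ^ m)) (B ^ (p ^ m)) := by
  intro A B C
  have hrel : ∀ r ∈ hRels p m α, PresentedGroup.mk (hRels p m α) r = 1 := fun r hr =>
    (QuotientGroup.eq_one_iff r).mpr (Subgroup.subset_normalClosure hr)
  have h1 : C⁻¹ * A * C = A ^ α := by
    apply mul_inv_eq_one.mp
    have h := hrel _ (Set.mem_insert _ _)
    simp only [map_mul, map_inv, map_zpow] at h
    exact h
  have h2 : C * B * C⁻¹ = B ^ α := by
    apply mul_inv_eq_one.mp
    have h := hrel _ (Set.mem_insert_of_mem _ (Set.mem_insert _ _))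
    simp only [map_mul, map_inv, map_zpow] at h
    exact h
  have h3 : A ^ (p ^ (2 * m)) = 1 := by
    have h := hrel _ (Set.mem_insert_of_mem _ (Set.mem_insert_of_mem _ (Set.mem_insert _ _)))
    simp only [map_pow] at h
    exact h
  have h4 : B ^ (p ^ (2 * m)) = 1 := by
    have h := hrel _ (Set.mem_insert_of_mem _ (Set.mem_insert_of_mem _
      (Set.mem_insert_of_mem _ (Set.mem_singleton _))))
    simp only [map_pow] at h
    exact h
  exact HGroupAux.key p m hp hodd α hα.1 A B C rfl h1 h2 h3 h4
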